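/- Let T be the random weighted shift associated with i.i.d. nonnegative bounded random variables (X_n)_{n≥1}. If X_1 is non-degenerate, then P({ω : T(ω)* T(ω) − T(ω) T(ω)* is a compact operator}) = 0; that is, T is almost surely not essentially normal. -/

import Mathlib

set_option maxHeartbeats 1000000
set_option synthInstance.maxHeartbeats 1000000
open scoped ENNReal Topology


open MeasureTheory ProbabilityTheory Filter

noncomputable section

/-- `ℓ²(ℕ, ℂ)`, the separable complex Hilbert space. -/
abbrev Hil : Type := lp (fun _ : ℕ => ℂ) 2

/-- The orthonormal basis `(e_n)` of `ℓ²(ℕ, ℂ)` (0-indexed: `el n` is the paper's `e_{n+1}`). -/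
def el (n : ℕ) : Hil := lp.single 2 n 1


lemma el_apply (n m : ℕ) : (el n) m = if m = n then 1 else 0 := by
  simp [el, lp.single_apply, Pi.single_apply]

lemma coord_eq_inner (f : Hil) (m : ℕ) : f m = @inner ℂ _ _ (el m) f := by
  rw [el, lp.inner_single_left]
  simp

lemma norm_el (n : ℕ) : ‖el n‖ = 1 := by
  have := lp.norm_single (p := 2) (E := fun _ : ℕ => ℂ) (by norm_num) n (1:ℂ)
  simpa [el] using this

lemma adj_el_succ {T : Hil →L[ℂ] Hil} {x : ℕ → ℝ}
    (hT : ∀ n, T (el n) = (x n : ℂ) • el (n + 1)) (n : ℕ) :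
    (ContinuousLinearMap.adjoint T) (el (n + 1)) = (x n : ℂ) • el n := by
  apply lp.ext
  funext m
  have h1 := coord_eq_inner ((ContinuousLinearMap.adjoint T) (el (n + 1))) m
  rw [h1, ContinuousLinearMap.adjoint_inner_right, hT m]
  rw [inner_smul_left, el, lp.inner_single_left]
  simp only [lp.coeFn_smul, Pi.smul_apply, el_apply]
  simp only [smul_eq_mul, one_mul, inner_smul_left]
  by_cases h : m = n
  · subst h; simp [Complex.conj_ofReal]
  · have : ¬ (m + 1 = n + 1) := by omega
    simp [h, this]

lemma adj_el_zero {T : Hil →L[ℂ] Hil} {x : ℕ → ℝ}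
    (hT : ∀ n, T (el n) = (x n : ℂ) • el (n + 1)) :
    (ContinuousLinearMap.adjoint T) (el 0) = 0 := by
  apply lp.ext
  funext m
  have h1 := coord_eq_inner ((ContinuousLinearMap.adjoint T) (el 0)) m
  rw [h1, ContinuousLinearMap.adjoint_inner_right, hT m]
  rw [inner_smul_left, el, lp.inner_single_left]
  simp [el_apply]

-- diagonal of the self-commutator
lemma comm_diag {T : Hil →L[ℂ] Hil} {x : ℕ → ℝ}
    (hT : ∀ n, T (el n) = (x n : ℂ) • el (n + 1)) (n : ℕ) :
    (ContinuousLinearMap.adjoint T ∘L T - T ∘L ContinuousLinearMap.adjoint T) (el (n + 1))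
      = ((x (n+1) ^ 2 - x n ^ 2 : ℝ) : ℂ) • el (n + 1) := by
  simp only [ContinuousLinearMap.sub_apply, ContinuousLinearMap.comp_apply]
  rw [hT (n+1), _root_.map_smul, adj_el_succ hT (n+1), adj_el_succ hT n, _root_.map_smul, hT n,
    smul_smul, smul_smul]
  rw [← sub_smul]
  norm_cast
  push_cast
  ring_nf

-- compactness forces diagonal entries to 0
lemma tendsto_of_compact_diag {A : Hil →L[ℂ] Hil} {d : ℕ → ℝ}
    (hA : ∀ n, A (el (n + 1)) = ((d n : ℝ) : ℂ) • el (n + 1))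
    (hc : IsCompactOperator ⇑A) : Tendsto d atTop (𝓝 0) := by
  by_contra h
  rw [Metric.tendsto_atTop] at h
  push_neg at h
  obtain ⟨ε, hε, hfreq⟩ := h
  obtain ⟨φ, hφ, hdφ⟩ := Filter.extraction_of_frequently_atTop
    (Filter.frequently_atTop.2 hfreq)
  obtain ⟨K, hK, hKn⟩ := hc
  obtain ⟨r, hr, hball⟩ := Metric.mem_nhds_iff.1 hKn
  set c : ℝ := r / 2 with hc'
  have hcpos : 0 < c := by positivity
  set w : ℕ → Hil := fun k => A ((c : ℂ) • el (φ k + 1)) with hw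
  have hwK : ∀ k, w k ∈ K := by
    intro k
    apply hball
    simp only [Metric.mem_ball, Set.mem_preimage]
    rw [dist_zero_right, norm_smul, norm_el]
    simp only [mul_one, Complex.norm_real]
    rw [Real.norm_eq_abs, abs_of_pos hcpos]
    linarith
  obtain ⟨a, -, ψ, hψ, hconv⟩ := hK.isSeqCompact hwK
  have hcauchy := hconv.cauchySeq
  rw [Metric.cauchySeq_iff] at hcauchy
  obtain ⟨N, hN⟩ := hcauchy (c * ε) (by positivity)
  have hdist := hN (N + 1) (by omega) N (by omega)
  simp only [Function.comp_apply] at hdist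
  -- lower bound on the distance via coordinate φ (ψ N) + 1
  set j : ℕ := φ (ψ N) + 1 with hj
  have hwk : ∀ k, w k = ((c : ℂ) * (d (φ k) : ℂ)) • el (φ k + 1) := by
    intro k
    rw [hw]
    simp only [_root_.map_smul, hA (φ k), smul_smul]
  have hne : φ (ψ (N + 1)) + 1 ≠ j := by
    have : ψ N < ψ (N + 1) := hψ (by omega)
    have := hφ this
    omega
  have hcoord : ((w (ψ (N+1)) - w (ψ N)) : Hil) j = -((c : ℂ) * (d (φ (ψ N)) : ℂ)) := by
    have hcond : ¬ (j = φ (ψ (N+1)) + 1) := fun h => hne h.symm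
    rw [lp.coeFn_sub, Pi.sub_apply, hwk, hwk]
    simp [lp.coeFn_smul, el_apply, hcond]
    intro h; exact absurd hj h
  have hlow : c * ε ≤ dist (w (ψ (N + 1))) (w (ψ N)) := by
    rw [dist_eq_norm]
    calc c * ε ≤ c * |d (φ (ψ N))| := by
          have h2 := hdφ (ψ N)
          rw [dist_zero_right, Real.norm_eq_abs] at h2
          exact mul_le_mul_of_nonneg_left h2 hcpos.le
      _ = ‖((w (ψ (N+1)) - w (ψ N)) : Hil) j‖ := by
          rw [hcoord]
          rw [norm_neg, norm_mul, Complex.norm_real, Complex.norm_real,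
            Real.norm_eq_abs, Real.norm_eq_abs, abs_of_pos hcpos]
      _ ≤ ‖w (ψ (N + 1)) - w (ψ N)‖ := lp.norm_apply_le_norm (by norm_num) _ _
  linarith



/-- The essential range of a real random variable: the set of `y` such that
`P(|f - y| < ε) > 0` for every `ε > 0`. -/
def essRange {Ω : Type*} [MeasurableSpace Ω] (P : Measure Ω) (f : Ω → ℝ) : Set ℝ :=
  {y : ℝ | ∀ ε > 0, 0 < P {ω | |f ω - y| < ε}}

lemma essRange_mem_Icc {Ω : Type*} [MeasurableSpace Ω] (P : Measure Ω)
    (f : Ω → ℝ) {C : ℝ} (hbdd : ∀ ω, 0 ≤ f ω ∧ f ω ≤ C)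
    {y : ℝ} (hy : y ∈ essRange P f) : 0 ≤ y ∧ y ≤ C := by
  constructor
  · by_contra h
    push_neg at h
    have h1 := hy (-y) (by linarith)
    have h2 : {ω | |f ω - y| < -y} = ∅ := by
      ext ω
      have := (hbdd ω).1
      simp only [Set.mem_setOf_eq, Set.mem_empty_iff_false, iff_false, not_lt]
      rw [abs_of_nonneg (by linarith)]
      linarith
    rw [h2] at h1
    simp at h1
  · by_contra h
    push_neg at h
    have h1 := hy (y - C) (by linarith)
    have h2 : {ω | |f ω - y| < y - C} = ∅ := by
      ext ω
      have := (hbdd ω).2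
      simp only [Set.mem_setOf_eq, Set.mem_empty_iff_false, iff_false, not_lt]
      rw [abs_of_nonpos (by linarith)]
      linarith
    rw [h2] at h1
    simp at h1

lemma prob_tendsto_zero
    {Ω : Type*} [MeasurableSpace Ω] (P : Measure Ω) [IsProbabilityMeasure P]
    (X : ℕ → Ω → ℝ) (C : ℝ)
    (hmeas : ∀ n, Measurable (X n))
    (hbdd : ∀ n ω, 0 ≤ X n ω ∧ X n ω ≤ C)
    (hindep : iIndepFun X P)
    (hident : ∀ n, IdentDistrib (X n) (X 0) P P)
    (hnd : ∃ a ∈ essRange P (X 0), ∃ b ∈ essRange P (X 0), a ≠ b) :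
    P {ω | Tendsto (fun n => (X (n+1) ω)^2 - (X n ω)^2) atTop (𝓝 (0:ℝ))} = 0 := by
  obtain ⟨a, ha, b, hb, hab⟩ := hnd
  obtain ⟨ha0, haC⟩ := essRange_mem_Icc P (X 0) (fun ω => hbdd 0 ω) ha
  obtain ⟨hb0, hbC⟩ := essRange_mem_Icc P (X 0) (fun ω => hbdd 0 ω) hb
  have hC : 0 ≤ C := le_trans ha0 haC
  set δ : ℝ := |b^2 - a^2| with hδdef
  have hδ : 0 < δ := by
    rw [hδdef, abs_pos]
    intro h
    have h2 : (b - a) * (b + a) = 0 := by ring_nf; linarith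
    rcases mul_eq_zero.1 h2 with h3 | h3
    · exact hab (by linarith)
    · exact hab (by linarith)
  set ε : ℝ := δ / (8 * (C + 1)) with hεdef
  have hε : 0 < ε := by positivity
  -- key separation estimate
  have hbound : ∀ x c : ℝ, 0 ≤ x → x ≤ C → 0 ≤ c → c ≤ C →
      |x - c| < ε → |x^2 - c^2| ≤ δ / 4 := by
    intro x c hx0 hxC hc0 hcC hxc
    have h1 : |x^2 - c^2| = |x - c| * (x + c) := by
      rw [← abs_of_nonneg (add_nonneg hx0 hc0), ← abs_mul]
      ring_nf
    rw [h1]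
    have h2 : |x - c| * (x + c) ≤ ε * (2 * (C + 1)) := by
      apply mul_le_mul hxc.le (by linarith) (by linarith) (by positivity)
    have h3 : ε * (2 * (C + 1)) ≤ δ / 4 := by
      rw [hεdef]
      rw [div_mul_eq_mul_div, div_le_div_iff₀ (by positivity) (by norm_num)]
      nlinarith
    linarith
  have hsep : ∀ x y : ℝ, 0 ≤ x → x ≤ C → 0 ≤ y → y ≤ C →
      |x - a| < ε → |y - b| < ε → δ / 2 ≤ |y^2 - x^2| := by
    intro x y hx0 hxC hy0 hyC hxa hyb
    have h1 := hbound x a hx0 hxC ha0 haC hxa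
    have h2 := hbound y b hy0 hyC hb0 hbC hyb
    have h3 : |b^2 - a^2| ≤ |b^2 - y^2| + (|y^2 - x^2| + |x^2 - a^2|) :=
      le_trans (abs_sub_le _ (y^2) _) (by gcongr; exact abs_sub_le _ (x^2) _)
    rw [abs_sub_comm] at h2
    linarith [hδdef ▸ h3]
  -- the independent events
  set Bs : ℕ → Set ℝ := fun m => if Even m then Metric.ball a ε else Metric.ball b ε
    with hBsdef
  have hBmeas : ∀ m, MeasurableSet (Bs m) := by
    intro m
    by_cases h : Even m
    · simp only [hBsdef, if_pos h]; exact measurableSet_ball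
    · simp only [hBsdef, if_neg h]; exact measurableSet_ball
  set s : ℕ → Set Ω := fun m => X m ⁻¹' Bs m with hsdef
  set E : ℕ → Set Ω := fun k => s (2*k) ∩ s (2*k+1) with hEdef
  have hsmeas : ∀ m, MeasurableSet (s m) := fun m => hmeas m (hBmeas m)
  have hEmeas : ∀ k, MeasurableSet (E k) := fun k =>
    (hsmeas (2*k)).inter (hsmeas (2*k+1))
  set pa : ENNReal := P (X 0 ⁻¹' Metric.ball a ε) with hpadef
  set pb : ENNReal := P (X 0 ⁻¹' Metric.ball b ε) with hpbdef
  have hps : ∀ m, P (s m) = if Even m then pa else pb := by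
    intro m
    rw [hsdef, hBsdef]
    by_cases h : Even m
    · simp only [h, if_true]
      exact (hident m).measure_mem_eq measurableSet_ball
    · simp only [h, if_false]
      exact (hident m).measure_mem_eq measurableSet_ball
  have hpa : 0 < pa := by
    have h1 := ha ε hε
    have h2 : {ω | |X 0 ω - a| < ε} = X 0 ⁻¹' Metric.ball a ε := by
      ext ω; simp [Metric.mem_ball, Real.dist_eq]
    rwa [h2] at h1
  have hpb : 0 < pb := by
    have h1 := hb ε hε
    have h2 : {ω | |X 0 ω - b| < ε} = X 0 ⁻¹' Metric.ball b ε := by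
      ext ω; simp [Metric.mem_ball, Real.dist_eq]
    rwa [h2] at h1
  -- each E k has probability pa * pb
  have hEk : ∀ k, P (E k) = P (s (2*k)) * P (s (2*k+1)) := by
    intro k
    have hpair := hindep.measure_inter_preimage_eq_mul
      ({2*k, 2*k+1} : Finset ℕ) (sets := Bs) (fun i _ => hBmeas i)
    have hpairset : (⋂ m ∈ ({2*k, 2*k+1} : Finset ℕ), X m ⁻¹' Bs m) = E k := by
      ext ω
      simp only [hEdef, hsdef, Set.mem_iInter, Finset.mem_insert, Finset.mem_singleton,
        Set.mem_inter_iff]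
      constructor
      · intro h; exact ⟨h _ (Or.inl rfl), h _ (Or.inr rfl)⟩
      · rintro ⟨h1, h2⟩ m (rfl | rfl) <;> assumption
    rw [← hpairset, hpair, Finset.prod_pair (by omega)]
  -- independence of the events E
  have hEindep : iIndepSet E P := by
    rw [iIndepSet_iff_meas_biInter hEmeas]
    intro S
    have hdisj : (↑S : Set ℕ).PairwiseDisjoint (fun k => ({2*k, 2*k+1} : Finset ℕ)) := by
      intro i _ j _ hij
      simp only [Finset.disjoint_left, Finset.mem_insert, Finset.mem_singleton]
      rintro m (rfl | rfl) <;> omega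
    have hsetEq : (⋂ k ∈ S, E k)
        = ⋂ m ∈ S.biUnion (fun k => ({2*k, 2*k+1} : Finset ℕ)), X m ⁻¹' Bs m := by
      ext ω
      simp only [hEdef, hsdef, Set.mem_iInter, Finset.mem_biUnion, Finset.mem_insert,
        Finset.mem_singleton, Set.mem_inter_iff]
      constructor
      · rintro h m ⟨k, hk, (rfl | rfl)⟩
        · exact (h k hk).1
        · exact (h k hk).2
      · intro h k hk
        exact ⟨h _ ⟨k, hk, Or.inl rfl⟩, h _ ⟨k, hk, Or.inr rfl⟩⟩
    rw [hsetEq, hindep.measure_inter_preimage_eq_mul _ (fun i _ => hBmeas i),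
      Finset.prod_biUnion hdisj]
    refine Finset.prod_congr rfl (fun k _ => ?_)
    rw [hEk k, Finset.prod_pair (by omega)]
  -- divergence of the sum
  have htsum : (∑' k, P (E k)) = ∞ := by
    have h1 : ∀ k : ℕ, P (E k) = pa * pb := by
      intro k
      rw [hEk k, hps, hps, if_pos ⟨k, by omega⟩, if_neg (by simp [Nat.even_add_one, parity_simps])]
    rw [tsum_congr h1]
    exact ENNReal.tsum_const_eq_top_of_ne_zero (mul_ne_zero hpa.ne' hpb.ne')
  have hlimsup : P (limsup E atTop) = 1 := measure_limsup_eq_one hEmeas hEindep htsum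
  have hcompl : P ((limsup E atTop)ᶜ) = 0 := by
    rw [measure_compl (MeasurableSet.measurableSet_limsup hEmeas) (measure_ne_top _ _), hlimsup,
      measure_univ]
    simp
  refine measure_mono_null ?_ hcompl
  intro ω hω
  simp only [Set.mem_compl_iff]
  intro hmem
  rw [mem_limsup_iff_frequently_mem] at hmem
  simp only [Set.mem_setOf_eq] at hω
  obtain ⟨N, hN⟩ := (Metric.tendsto_atTop.1 hω) (δ/2) (by positivity)
  obtain ⟨k, hkN, hkE⟩ := frequently_atTop.1 hmem N
  have h2k : Even (2*k) := ⟨k, by omega⟩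
  have h2k1 : ¬ Even (2*k+1) := by simp [Nat.even_add_one, h2k]
  have hxa : |X (2*k) ω - a| < ε := by
    have := hkE.1
    simp only [hsdef, hBsdef, Set.mem_preimage, if_pos h2k, Metric.mem_ball,
      Real.dist_eq] at this
    exact this
  have hyb : |X (2*k+1) ω - b| < ε := by
    have := hkE.2
    simp only [hsdef, hBsdef, Set.mem_preimage, if_neg h2k1, Metric.mem_ball,
      Real.dist_eq] at this
    exact this
  have hlow := hsep (X (2*k) ω) (X (2*k+1) ω) (hbdd _ ω).1 (hbdd _ ω).2
    (hbdd _ ω).1 (hbdd _ ω).2 hxa hyb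
  have hup := hN (2*k) (by omega)
  rw [dist_zero_right, Real.norm_eq_abs] at hup
  have : 2*k + 1 = 2*k + 1 := rfl
  linarith

/-- if `X_1` is non-degenerate, then almost surely the self-commutator
`T(ω)* T(ω) − T(ω) T(ω)*` is not compact, i.e. `T` is a.s. not essentially normal. -/
theorem stmt_17
    {Ω : Type*} [MeasurableSpace Ω] (P : Measure Ω) [IsProbabilityMeasure P]
    (X : ℕ → Ω → ℝ) (C : ℝ)
    (hmeas : ∀ n, Measurable (X n))
    (hbdd : ∀ n ω, 0 ≤ X n ω ∧ X n ω ≤ C)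
    (hindep : iIndepFun X P)
    (hident : ∀ n, IdentDistrib (X n) (X 0) P P)
    (T : Ω → Hil →L[ℂ] Hil)
    (hT : ∀ ω n, T ω (el n) = (X n ω : ℂ) • el (n + 1))
    (hnd : ∃ a ∈ essRange P (X 0), ∃ b ∈ essRange P (X 0), a ≠ b) :
    P {ω | IsCompactOperator
        ⇑(ContinuousLinearMap.adjoint (T ω) ∘L T ω -
          T ω ∘L ContinuousLinearMap.adjoint (T ω))} = 0 := by
  have hsub : {ω | IsCompactOperator
        ⇑(ContinuousLinearMap.adjoint (T ω) ∘L T ω -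
          T ω ∘L ContinuousLinearMap.adjoint (T ω))} ⊆
      {ω | Tendsto (fun n => (X (n+1) ω)^2 - (X n ω)^2) atTop (𝓝 (0:ℝ))} := by
    intro ω hω
    simp only [Set.mem_setOf_eq] at hω ⊢
    exact tendsto_of_compact_diag (fun n => comm_diag (hT ω) n) hω
  exact measure_mono_null hsub (prob_tendsto_zero P X C hmeas hbdd hindep hident hnd)

end
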